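/- For every ε > 0 there is a constant C(ε) such that for all T ≥ 2, all H with 1 ≤ H ≤ T, all K with 1 ≤ K ≤ T^{1/3−ε}, and all K' with K < K' ≤ 2K, one has ∫_T^{T+H} T^{1/2} | ∑_{K < n ≤ K'} (−1)^n d(n) n^{1/4} e^{i√(8πnt)} |² dt ≤ C(ε) · (T^{1+ε}·H + T^{5/3+ε}). -/

import Mathlib

open Real MeasureTheory

/-- number of divisors of `n`, as a real number -/
noncomputable def divd (n : ℕ) : ℝ := n.divisors.card

/-- error term in the Dirichlet divisor problem:
`Δ(x) = ∑_{n ≤ x} d(n) − x (log x + 2γ − 1)` -/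
noncomputable def Δ (x : ℝ) : ℝ :=
  (∑ n ∈ Finset.Icc 1 ⌊x⌋₊, divd n)
    - x * (Real.log x + 2 * Real.eulerMascheroniConstant - 1)

/-- modified divisor-problem error term
`Δ*(x) = −Δ(x) + 2Δ(2x) − (1/2)Δ(4x)` -/
noncomputable def Δstar (x : ℝ) : ℝ :=
  -Δ x + 2 * Δ (2 * x) - (1 / 2) * Δ (4 * x)

/-- error term in the mean square formula for `ζ(1/2+it)`:
`E(T) = ∫_0^T |ζ(1/2+it)|² dt − T (log (T/(2π)) + 2γ − 1)` -/
noncomputable def E (T : ℝ) : ℝ :=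
  (∫ t in (0:ℝ)..T, ‖riemannZeta (1 / 2 + t * Complex.I)‖ ^ 2)
    - T * (Real.log (T / (2 * π)) + 2 * Real.eulerMascheroniConstant - 1)

/-- `E*(t) = E(t) − 2π Δ*(t/(2π))` -/
noncomputable def Estar (t : ℝ) : ℝ := E t - 2 * π * Δstar (t / (2 * π))

/-- `R(T)`, defined by the relation `∫_0^T E*(t) dt = (3π/4) T + R(T)` -/
noncomputable def R (T : ℝ) : ℝ := (∫ t in (0:ℝ)..T, Estar t) - 3 * π / 4 * T

/-- Atkinson's phase function
`f(t,n) = 2t·arsinh(√(πn/(2t))) + √(2πnt + π²n²) − π/4` -/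
noncomputable def fA (t : ℝ) (n : ℕ) : ℝ :=
  2 * t * Real.arsinh (Real.sqrt (π * n / (2 * t)))
    + Real.sqrt (2 * π * n * t + π ^ 2 * n ^ 2) - π / 4

/-- Atkinson's amplitude function
`e(t,n) = (1 + πn/(2t))^{−1/4} ((2t/(πn))^{1/2} arsinh(√(πn/(2t))))^{−1}` -/
noncomputable def eA (t : ℝ) (n : ℕ) : ℝ :=
  (1 + π * n / (2 * t)) ^ (-(1 / 4 : ℝ)) *
    ((2 * t / (π * n)) ^ ((1 : ℝ) / 2) * Real.arsinh (Real.sqrt (π * n / (2 * t))))⁻¹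

set_option maxHeartbeats 1000000

lemma icc_eq_ioc (M : ℕ) : Finset.Icc 1 M = Finset.Ioc 0 M := by
  ext x; simp [Nat.lt_iff_add_one_le]

lemma divisors_eq (n M : ℕ) (h1 : 1 ≤ n) (h2 : n ≤ M) :
    n.divisors = (Finset.Icc 1 M).filter (· ∣ n) := by
  ext a
  simp only [Nat.mem_divisors, Finset.mem_filter, Finset.mem_Icc]
  constructor
  · rintro ⟨hd, hn⟩
    have ha : a ≠ 0 := by rintro rfl; exact hn (Nat.eq_zero_of_zero_dvd hd)
    exact ⟨⟨Nat.one_le_iff_ne_zero.mpr ha, le_trans (Nat.le_of_dvd (by omega) hd) h2⟩, hd⟩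
  · rintro ⟨_, hd⟩; exact ⟨hd, by omega⟩

lemma count_multiples (M L : ℕ) :
    ((Finset.Icc 1 M).filter (fun n => L ∣ n)).card = M / L := by
  rw [icc_eq_ioc]
  exact Nat.Ioc_filter_dvd_card_eq_div M L

lemma sum_inv_multiples (M g : ℕ) (hg : 1 ≤ g) :
    ∑ a ∈ (Finset.Icc 1 M).filter (fun a => g ∣ a), (1:ℝ)/a ≤
      (1/g) * ∑ r ∈ Finset.Icc 1 M, (1:ℝ)/r := by
  have key : ∑ a ∈ (Finset.Icc 1 M).filter (fun a => g ∣ a), (1:ℝ)/a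
      = ∑ k ∈ ((Finset.Icc 1 M).filter (fun a => g ∣ a)).image (· / g), (1:ℝ)/(g*k) := by
    rw [Finset.sum_image]
    · apply Finset.sum_congr rfl
      intro a ha
      simp only [Finset.mem_filter, Finset.mem_Icc] at ha
      rw [← Nat.cast_mul, Nat.mul_div_cancel' ha.2]
    · intro a ha b hb hab
      simp only [Finset.mem_coe, Finset.mem_filter] at ha hb
      have : g * (a/g) = g * (b/g) := congrArg (g * ·) hab
      rwa [Nat.mul_div_cancel' ha.2, Nat.mul_div_cancel' hb.2] at this
  have rhs : (1/(g:ℝ)) * ∑ r ∈ Finset.Icc 1 M, (1:ℝ)/r = ∑ r ∈ Finset.Icc 1 M, (1:ℝ)/(g*r) := by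
    rw [Finset.mul_sum]; apply Finset.sum_congr rfl; intro r _
    rw [one_div, one_div, one_div, mul_inv]
  rw [key, rhs]
  apply Finset.sum_le_sum_of_subset_of_nonneg
  · intro k hk
    simp only [Finset.mem_image, Finset.mem_filter, Finset.mem_Icc] at hk
    obtain ⟨a, ⟨⟨h1, h2⟩, hd⟩, rfl⟩ := hk
    simp only [Finset.mem_Icc]
    constructor
    · exact Nat.one_le_div_iff (by omega) |>.mpr (Nat.le_of_dvd (by omega) hd)
    · exact le_trans (Nat.div_le_self a g) h2
  · intro k _ _; positivity

lemma harm_le : ∀ M : ℕ, ∑ r ∈ Finset.Icc 1 M, (1:ℝ)/r ≤ 1 + Real.log M := by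
  intro M
  induction M with
  | zero => simp
  | succ M ih =>
    rcases Nat.eq_zero_or_pos M with h0 | hM
    · subst h0; simp
    rw [Finset.sum_Icc_succ_top (by omega)]
    have hlog : Real.log M + 1/(M+1) ≤ Real.log (M+1) := by
      have h1 : (0:ℝ) < M := by exact_mod_cast hM
      have h2 := Real.log_le_sub_one_of_pos (x := (M:ℝ)/(M+1)) (by positivity)
      rw [Real.log_div (by positivity) (by positivity)] at h2
      have h3 : (M:ℝ)/(M+1) - 1 = -(1/(M+1)) := by field_simp; ring
      linarith [h3 ▸ h2]
    push_cast
    push_cast at ih hlog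
    linarith

lemma harm_nonneg (M : ℕ) : 0 ≤ ∑ r ∈ Finset.Icc 1 M, (1:ℝ)/r := by
  apply Finset.sum_nonneg; intro r _; positivity

lemma divd_sq_sum (M : ℕ) (hM : 1 ≤ M) :
    ∑ n ∈ Finset.Icc 1 M, (divd n)^2 ≤ M * (1 + Real.log M)^3 := by
  set Hm := ∑ r ∈ Finset.Icc 1 M, (1:ℝ)/r with hHm
  have hH0 : 0 ≤ Hm := harm_nonneg M
  have hHle : Hm ≤ 1 + Real.log M := harm_le M
  have hlog0 : (0:ℝ) ≤ 1 + Real.log M := by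
    have : (0:ℝ) ≤ Real.log M := Real.log_nonneg (by exact_mod_cast hM)
    linarith
  -- step 1 : rewrite divd as indicator sum
  have step1 : ∀ n ∈ Finset.Icc 1 M, (divd n)^2 =
      ∑ a ∈ Finset.Icc 1 M, ∑ b ∈ Finset.Icc 1 M,
        (if Nat.lcm a b ∣ n then (1:ℝ) else 0) := by
    intro n hn
    rw [Finset.mem_Icc] at hn
    have hd : divd n = ∑ a ∈ Finset.Icc 1 M, (if a ∣ n then (1:ℝ) else 0) := by
      rw [divd, divisors_eq n M hn.1 hn.2, Finset.card_filter]
      push_cast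
      apply Finset.sum_congr rfl; intro a _
      by_cases h : a ∣ n <;> simp [h]
    rw [sq, hd, Finset.sum_mul_sum]
    apply Finset.sum_congr rfl; intro a _
    apply Finset.sum_congr rfl; intro b _
    by_cases h1 : a ∣ n <;> by_cases h2 : b ∣ n <;>
      simp [h1, h2, Nat.lcm_dvd_iff]
  rw [Finset.sum_congr rfl step1, Finset.sum_comm]
  have swap2 : ∑ a ∈ Finset.Icc 1 M, ∑ n ∈ Finset.Icc 1 M, ∑ b ∈ Finset.Icc 1 M,
        (if Nat.lcm a b ∣ n then (1:ℝ) else 0)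
      = ∑ a ∈ Finset.Icc 1 M, ∑ b ∈ Finset.Icc 1 M, ((M / Nat.lcm a b : ℕ) : ℝ) := by
    apply Finset.sum_congr rfl; intro a _
    rw [Finset.sum_comm]
    apply Finset.sum_congr rfl; intro b _
    rw [Finset.sum_boole, ← count_multiples M (Nat.lcm a b)]
  rw [swap2]
  -- step 2 : bound each term by sum over common divisors
  have step2 : ∀ a ∈ Finset.Icc 1 M, ∀ b ∈ Finset.Icc 1 M,
      ((M / Nat.lcm a b : ℕ) : ℝ) ≤
        ∑ g ∈ Finset.Icc 1 M,
          (M:ℝ) * g * (if g ∣ a then (1:ℝ)/a else 0) * (if g ∣ b then (1:ℝ)/b else 0) := by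
    intro a ha b hb
    rw [Finset.mem_Icc] at ha hb
    have ha0 : 0 < a := ha.1
    have hb0 : 0 < b := hb.1
    have hgcd0 : 0 < Nat.gcd a b := Nat.gcd_pos_of_pos_left b ha0
    have hlcm0 : 0 < Nat.lcm a b := Nat.lcm_pos ha0 hb0
    have e1 : ((M / Nat.lcm a b : ℕ) : ℝ) ≤ (M:ℝ) * (Nat.gcd a b) / (a * b) := by
      refine (Nat.cast_div_le).trans ?_
      have hml : (Nat.gcd a b : ℝ) * (Nat.lcm a b) = (a:ℝ) * b := by
        exact_mod_cast congrArg (Nat.cast (R := ℝ)) (Nat.gcd_mul_lcm a b)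
      rw [div_le_div_iff₀ (by exact_mod_cast hlcm0) (by positivity)]
      apply le_of_eq
      rw [← hml]; ring
    refine e1.trans ?_
    have e2 : (Nat.gcd a b : ℝ) ≤
        ∑ g ∈ (Finset.Icc 1 M).filter (fun g => g ∣ a ∧ g ∣ b), (g:ℝ) := by
      refine Finset.single_le_sum (f := fun g : ℕ => (g:ℝ)) (fun g _ => by positivity) ?_
      simp only [Finset.mem_filter, Finset.mem_Icc]
      exact ⟨⟨hgcd0, le_trans (Nat.le_of_dvd ha0 (Nat.gcd_dvd_left a b)) ha.2⟩,
        Nat.gcd_dvd_left a b, Nat.gcd_dvd_right a b⟩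
    have e3 : ∑ g ∈ Finset.Icc 1 M,
          (M:ℝ) * g * (if g ∣ a then (1:ℝ)/a else 0) * (if g ∣ b then (1:ℝ)/b else 0)
        = (M:ℝ) / (a*b) * ∑ g ∈ (Finset.Icc 1 M).filter (fun g => g ∣ a ∧ g ∣ b), (g:ℝ) := by
      rw [Finset.mul_sum, Finset.sum_filter]
      apply Finset.sum_congr rfl; intro g _
      by_cases h1 : g ∣ a <;> by_cases h2 : g ∣ b <;> simp [h1, h2] <;> field_simp <;> ring
    rw [e3]
    calc (M:ℝ) * (Nat.gcd a b) / (a * b) = (M:ℝ)/(a*b) * (Nat.gcd a b) := by ring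
      _ ≤ (M:ℝ)/(a*b) * ∑ g ∈ (Finset.Icc 1 M).filter (fun g => g ∣ a ∧ g ∣ b), (g:ℝ) :=
          mul_le_mul_of_nonneg_left e2 (by positivity)
  calc ∑ a ∈ Finset.Icc 1 M, ∑ b ∈ Finset.Icc 1 M, ((M / Nat.lcm a b : ℕ) : ℝ)
      ≤ ∑ a ∈ Finset.Icc 1 M, ∑ b ∈ Finset.Icc 1 M, ∑ g ∈ Finset.Icc 1 M,
          (M:ℝ) * g * (if g ∣ a then (1:ℝ)/a else 0) * (if g ∣ b then (1:ℝ)/b else 0) := by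
        apply Finset.sum_le_sum; intro a ha
        apply Finset.sum_le_sum; intro b hb
        exact step2 a ha b hb
    _ = ∑ g ∈ Finset.Icc 1 M, (M:ℝ) * g *
          (∑ a ∈ Finset.Icc 1 M, (if g ∣ a then (1:ℝ)/a else 0)) *
          (∑ b ∈ Finset.Icc 1 M, (if g ∣ b then (1:ℝ)/b else 0)) := by
        calc ∑ a ∈ Finset.Icc 1 M, ∑ b ∈ Finset.Icc 1 M, ∑ g ∈ Finset.Icc 1 M,
              (M:ℝ) * g * (if g ∣ a then (1:ℝ)/a else 0) * (if g ∣ b then (1:ℝ)/b else 0)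
            = ∑ a ∈ Finset.Icc 1 M, ∑ g ∈ Finset.Icc 1 M, ∑ b ∈ Finset.Icc 1 M,
              (M:ℝ) * g * (if g ∣ a then (1:ℝ)/a else 0) * (if g ∣ b then (1:ℝ)/b else 0) := by
              apply Finset.sum_congr rfl; intro a _; exact Finset.sum_comm
          _ = ∑ g ∈ Finset.Icc 1 M, ∑ a ∈ Finset.Icc 1 M, ∑ b ∈ Finset.Icc 1 M,
              (M:ℝ) * g * (if g ∣ a then (1:ℝ)/a else 0) * (if g ∣ b then (1:ℝ)/b else 0) :=
              Finset.sum_comm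
          _ = _ := by
              apply Finset.sum_congr rfl; intro g _
              rw [← Finset.sum_mul_sum, ← Finset.mul_sum]
    _ ≤ ∑ g ∈ Finset.Icc 1 M, (M:ℝ) * Hm^2 * (1/g) := by
        apply Finset.sum_le_sum; intro g hg
        rw [Finset.mem_Icc] at hg
        have hg1 : (1:ℕ) ≤ g := hg.1
        have hs : ∑ a ∈ Finset.Icc 1 M, (if g ∣ a then (1:ℝ)/a else 0) ≤ (1/g) * Hm := by
          rw [← Finset.sum_filter]
          exact sum_inv_multiples M g hg.1
        have hs0 : 0 ≤ ∑ a ∈ Finset.Icc 1 M, (if g ∣ a then (1:ℝ)/a else 0) := by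
          apply Finset.sum_nonneg; intro a _; split <;> positivity
        have hgr : (1:ℝ) ≤ (g:ℝ) := by exact_mod_cast hg1
        have key : (∑ a ∈ Finset.Icc 1 M, (if g ∣ a then (1:ℝ)/a else 0)) *
            (∑ b ∈ Finset.Icc 1 M, (if g ∣ b then (1:ℝ)/b else 0)) ≤ ((1/g)*Hm)*((1/g)*Hm) :=
          mul_le_mul hs hs hs0 (by positivity)
        calc (M:ℝ) * g * (∑ a ∈ Finset.Icc 1 M, (if g ∣ a then (1:ℝ)/a else 0)) *
              (∑ b ∈ Finset.Icc 1 M, (if g ∣ b then (1:ℝ)/b else 0))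
            = (M:ℝ) * g * ((∑ a ∈ Finset.Icc 1 M, (if g ∣ a then (1:ℝ)/a else 0)) *
              (∑ b ∈ Finset.Icc 1 M, (if g ∣ b then (1:ℝ)/b else 0))) := by ring
          _ ≤ (M:ℝ) * g * (((1/g)*Hm)*((1/g)*Hm)) :=
              mul_le_mul_of_nonneg_left key (by positivity)
          _ = (M:ℝ) * Hm^2 * (1/g) := by
              have hg0 : (g:ℝ) ≠ 0 := by positivity
              field_simp
    _ = (M:ℝ) * Hm^2 * Hm := by rw [← Finset.mul_sum]
    _ ≤ (M:ℝ) * (1 + Real.log M)^3 := by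
        have h3 : Hm^2 * Hm = Hm^3 := by ring
        have h4 : Hm^3 ≤ (1 + Real.log M)^3 := pow_le_pow_left₀ hH0 hHle 3
        calc (M:ℝ) * Hm^2 * Hm = (M:ℝ) * Hm^3 := by ring
          _ ≤ (M:ℝ) * (1 + Real.log M)^3 := mul_le_mul_of_nonneg_left h4 (by positivity)

lemma cos_sqrt_antideriv (c : ℝ) (hc : c ≠ 0) {t : ℝ} (ht : 0 < t) :
    HasDerivAt (fun t => 2*Real.sqrt t/c * Real.sin (c*Real.sqrt t)
      + 2/c^2 * Real.cos (c*Real.sqrt t)) (Real.cos (c*Real.sqrt t)) t := by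
  have hs : Real.sqrt t ≠ 0 := by positivity
  have h1 : HasDerivAt Real.sqrt (1/(2*Real.sqrt t)) t := Real.hasDerivAt_sqrt ht.ne'
  have h2 : HasDerivAt (fun t => c * Real.sqrt t) (c * (1/(2*Real.sqrt t))) t := h1.const_mul c
  have h3 : HasDerivAt (fun t => Real.sin (c*Real.sqrt t))
      (Real.cos (c*Real.sqrt t) * (c * (1/(2*Real.sqrt t)))) t :=
    (Real.hasDerivAt_sin _).comp t h2
  have h4 : HasDerivAt (fun t => Real.cos (c*Real.sqrt t))
      (-Real.sin (c*Real.sqrt t) * (c * (1/(2*Real.sqrt t)))) t :=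
    (Real.hasDerivAt_cos _).comp t h2
  have h5 : HasDerivAt (fun t => 2*Real.sqrt t/c) (2*(1/(2*Real.sqrt t))/c) t :=
    (h1.const_mul 2).div_const c
  have h6 := (h5.mul h3).add (h4.const_mul (2/c^2))
  exact h6.congr_deriv (by field_simp; ring)

lemma cos_sqrt_integral_bound (c : ℝ) (hc : c ≠ 0) (u v : ℝ) (hu : 0 < u) (huv : u ≤ v) :
    |∫ t in u..v, Real.cos (c * Real.sqrt t)| ≤ 4 * Real.sqrt v / |c| + 4 / c^2 := by
  set G := fun t => 2*Real.sqrt t/c * Real.sin (c*Real.sqrt t)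
      + 2/c^2 * Real.cos (c*Real.sqrt t) with hG
  have hcont : Continuous fun t => Real.cos (c * Real.sqrt t) :=
    Real.continuous_cos.comp (continuous_const.mul Real.continuous_sqrt)
  have hftc : ∫ t in u..v, Real.cos (c * Real.sqrt t) = G v - G u := by
    apply intervalIntegral.integral_eq_sub_of_hasDerivAt
    · intro t ht
      rw [Set.uIcc_of_le huv] at ht
      exact cos_sqrt_antideriv c hc (lt_of_lt_of_le hu ht.1)
    · exact hcont.intervalIntegrable u v
  have hGb : ∀ t, 0 < t → t ≤ v → |G t| ≤ 2 * Real.sqrt v / |c| + 2 / c^2 := by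
    intro t ht htv
    have h1 : |2*Real.sqrt t/c * Real.sin (c*Real.sqrt t)| ≤ 2*Real.sqrt v/|c| := by
      rw [abs_mul, abs_div]
      have : |2*Real.sqrt t| = 2*Real.sqrt t := abs_of_nonneg (by positivity)
      rw [this]
      calc 2*Real.sqrt t/|c| * |Real.sin (c*Real.sqrt t)| ≤ 2*Real.sqrt t/|c| * 1 :=
            mul_le_mul_of_nonneg_left (Real.abs_sin_le_one _) (by positivity)
        _ = 2*Real.sqrt t/|c| := mul_one _
        _ ≤ 2*Real.sqrt v/|c| := by
            apply (div_le_div_iff_of_pos_right (abs_pos.mpr hc)).mpr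
            have := Real.sqrt_le_sqrt htv
            linarith
    have h2 : |2/c^2 * Real.cos (c*Real.sqrt t)| ≤ 2/c^2 := by
      rw [abs_mul]
      have e : |2/c^2| = 2/c^2 := abs_of_nonneg (by positivity)
      rw [e]
      calc 2/c^2 * |Real.cos (c*Real.sqrt t)| ≤ 2/c^2 * 1 :=
            mul_le_mul_of_nonneg_left (Real.abs_cos_le_one _) (by positivity)
        _ = 2/c^2 := mul_one _
    calc |G t| ≤ |2*Real.sqrt t/c * Real.sin (c*Real.sqrt t)| + |2/c^2 * Real.cos (c*Real.sqrt t)| :=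
          abs_add_le _ _
      _ ≤ 2 * Real.sqrt v / |c| + 2 / c^2 := add_le_add h1 h2
  rw [hftc]
  calc |G v - G u| ≤ |G v| + |G u| := abs_sub _ _
    _ ≤ (2 * Real.sqrt v / |c| + 2 / c^2) + (2 * Real.sqrt v / |c| + 2 / c^2) :=
        add_le_add (hGb v (lt_of_lt_of_le hu huv) le_rfl) (hGb u hu huv)
    _ = 4 * Real.sqrt v / |c| + 4 / c^2 := by ring

lemma norm_sq_sum_exp (s : Finset ℕ) (a : ℕ → ℝ) (θ : ℕ → ℝ) :
    ‖∑ n ∈ s, (a n : ℂ) * Complex.exp ((θ n : ℂ) * Complex.I)‖^2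
      = ∑ m ∈ s, ∑ n ∈ s, a m * a n * Real.cos (θ m - θ n) := by
  set z := ∑ n ∈ s, (a n : ℂ) * Complex.exp ((θ n : ℂ) * Complex.I) with hz
  have key : z * (starRingEnd ℂ) z
      = ∑ m ∈ s, ∑ n ∈ s, ((a m * a n : ℝ) : ℂ) * Complex.exp ((↑(θ m - θ n)) * Complex.I) := by
    rw [hz, map_sum, Finset.sum_mul_sum]
    apply Finset.sum_congr rfl; intro m _
    apply Finset.sum_congr rfl; intro n _
    rw [map_mul, Complex.conj_ofReal, ← Complex.exp_conj]
    have : (starRingEnd ℂ) ((θ n : ℂ) * Complex.I) = -((θ n : ℂ) * Complex.I) := by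
      rw [map_mul, Complex.conj_ofReal, Complex.conj_I]; ring
    rw [this]
    rw [mul_mul_mul_comm, ← Complex.exp_add]
    push_cast
    ring_nf
  have h1 : ‖z‖^2 = (z * (starRingEnd ℂ) z).re := by
    rw [Complex.mul_conj]
    simp [Complex.sq_norm]
  rw [h1, key, Complex.re_sum]
  apply Finset.sum_congr rfl; intro m _
  rw [Complex.re_sum]
  apply Finset.sum_congr rfl; intro n _
  rw [Complex.re_ofReal_mul, Complex.exp_ofReal_mul_I_re]

lemma inner_harm {M₀ M₁ m : ℕ} (hM₀ : 1 ≤ M₀) (hm : m ≤ M₁) :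
    ∑ n ∈ Finset.Ioc M₀ M₁, (if m ≠ n then 1/|(m:ℝ)-(n:ℝ)| else 0)
      ≤ 2 * ∑ r ∈ Finset.Icc 1 M₁, (1:ℝ)/r := by
  classical
  rw [← Finset.sum_filter]
  set s₁ := (Finset.Ioc M₀ M₁).filter (fun n => n < m) with hs₁
  set s₂ := (Finset.Ioc M₀ M₁).filter (fun n => m < n) with hs₂
  have hu : (Finset.Ioc M₀ M₁).filter (fun n => m ≠ n) = s₁ ∪ s₂ := by
    ext n
    simp only [hs₁, hs₂, Finset.mem_filter, Finset.mem_union, Finset.mem_Ioc]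
    omega
  have hdisj : Disjoint s₁ s₂ := by
    rw [Finset.disjoint_left]
    intro n h1 h2
    simp only [hs₁, hs₂, Finset.mem_filter] at h1 h2
    omega
  rw [hu, Finset.sum_union hdisj]
  have hb1 : ∑ n ∈ s₁, 1/|(m:ℝ)-(n:ℝ)| ≤ ∑ r ∈ Finset.Icc 1 M₁, (1:ℝ)/r := by
    have e : ∑ n ∈ s₁, 1/|(m:ℝ)-(n:ℝ)| = ∑ r ∈ s₁.image (fun n => m - n), (1:ℝ)/r := by
      rw [Finset.sum_image]
      · apply Finset.sum_congr rfl
        intro n hn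
        simp only [hs₁, Finset.mem_filter, Finset.mem_Ioc] at hn
        have h1 : (n:ℝ) < m := by exact_mod_cast hn.2
        rw [Nat.cast_sub hn.2.le, abs_of_pos (by linarith)]
      · intro x hx y hy hxy
        simp only [Finset.mem_coe, hs₁, Finset.mem_filter] at hx hy hxy
        omega
    rw [e]
    apply Finset.sum_le_sum_of_subset_of_nonneg
    · intro r hr
      simp only [Finset.mem_image, hs₁, Finset.mem_filter, Finset.mem_Ioc] at hr
      obtain ⟨n, ⟨⟨hn1, hn2⟩, hnm⟩, rfl⟩ := hr
      simp only [Finset.mem_Icc]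
      omega
    · intro r _ _; positivity
  have hb2 : ∑ n ∈ s₂, 1/|(m:ℝ)-(n:ℝ)| ≤ ∑ r ∈ Finset.Icc 1 M₁, (1:ℝ)/r := by
    have e : ∑ n ∈ s₂, 1/|(m:ℝ)-(n:ℝ)| = ∑ r ∈ s₂.image (fun n => n - m), (1:ℝ)/r := by
      rw [Finset.sum_image]
      · apply Finset.sum_congr rfl
        intro n hn
        simp only [hs₂, Finset.mem_filter, Finset.mem_Ioc] at hn
        have h1 : (m:ℝ) < n := by exact_mod_cast hn.2
        rw [Nat.cast_sub hn.2.le, abs_of_neg (by linarith)]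
        rw [neg_sub]
      · intro x hx y hy hxy
        simp only [Finset.mem_coe, hs₂, Finset.mem_filter] at hx hy hxy
        omega
    rw [e]
    apply Finset.sum_le_sum_of_subset_of_nonneg
    · intro r hr
      simp only [Finset.mem_image, hs₂, Finset.mem_filter, Finset.mem_Ioc] at hr
      obtain ⟨n, ⟨⟨hn1, hn2⟩, hnm⟩, rfl⟩ := hr
      simp only [Finset.mem_Icc]
      omega
    · intro r _ _; positivity
  linarith

lemma offJ (T H K : ℝ) (hT : 2 ≤ T) (hH1 : 1 ≤ H) (hHT : H ≤ T) (hK1 : 1 ≤ K) (hKT : K ≤ T)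
    (m n : ℕ) (hm : (m:ℝ) ≤ 2*K) (hn : (n:ℝ) ≤ 2*K) (hmn : m ≠ n) :
    |∫ t in T..(T+H), Real.cos ((Real.sqrt (8*π*m) - Real.sqrt (8*π*n)) * Real.sqrt t)|
      ≤ 8 * Real.sqrt (2*T) * Real.sqrt K / |(m:ℝ) - (n:ℝ)| := by
  have hK0 : (0:ℝ) < K := by linarith
  set c : ℝ := Real.sqrt (8*π*m) - Real.sqrt (8*π*n) with hc
  -- 1 ≤ |m - n|
  have h1mn : (1:ℝ) ≤ |(m:ℝ) - (n:ℝ)| := by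
    have hz : (m:ℤ) - n ≠ 0 := by
      intro h; apply hmn; omega
    have : ((1:ℤ)) ≤ |(m:ℤ) - (n:ℤ)| := Int.one_le_abs hz
    calc (1:ℝ) = ((1:ℤ):ℝ) := by norm_num
      _ ≤ |((m:ℤ) - n : ℤ)| := by exact_mod_cast this
      _ = |(m:ℝ) - (n:ℝ)| := by push_cast; norm_num
  have hmn0 : (0:ℝ) < |(m:ℝ) - (n:ℝ)| := by linarith
  -- lower bound for |c|
  have hlow : |(m:ℝ) - (n:ℝ)| ≤ Real.sqrt K * |c| := by
    have hsqb : ∀ x:ℝ, 0 ≤ x → x ≤ 2*K → Real.sqrt (8*π*x) ≤ 4*Real.sqrt π*Real.sqrt K := by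
      intro x hx0 hx
      have h2 : Real.sqrt (16*π*K) = 4*Real.sqrt π*Real.sqrt K := by
        rw [show 16*π*K = (4*Real.sqrt π*Real.sqrt K)^2 from by
          rw [mul_pow, mul_pow, Real.sq_sqrt Real.pi_pos.le, Real.sq_sqrt hK0.le]; ring]
        exact Real.sqrt_sq (by positivity)
      calc Real.sqrt (8*π*x) ≤ Real.sqrt (16*π*K) :=
            Real.sqrt_le_sqrt (by nlinarith [Real.pi_pos])
        _ = _ := h2
    have hsum : Real.sqrt (8*π*m) + Real.sqrt (8*π*n) ≤ 8*Real.sqrt π*Real.sqrt K := by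
      have h1 := hsqb m (by positivity) hm
      have h2 := hsqb n (by positivity) hn
      linarith
    have hsum0 : 0 ≤ Real.sqrt (8*π*m) + Real.sqrt (8*π*n) := by positivity
    have hprod : |c| * (Real.sqrt (8*π*m) + Real.sqrt (8*π*n)) = 8*π*|(m:ℝ) - (n:ℝ)| := by
      rw [← abs_of_nonneg hsum0, ← abs_mul]
      have e : c * (Real.sqrt (8*π*m) + Real.sqrt (8*π*n))
          = (Real.sqrt (8*π*m))^2 - (Real.sqrt (8*π*n))^2 := by rw [hc]; ring
      rw [e, Real.sq_sqrt (by positivity), Real.sq_sqrt (by positivity),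
        show 8*π*(m:ℝ) - 8*π*(n:ℝ) = 8*π*((m:ℝ) - n) by ring, abs_mul,
        abs_of_pos (by positivity : (0:ℝ) < 8*π)]
    have hpile : Real.sqrt π ≤ π := by
      calc Real.sqrt π ≤ Real.sqrt (π^2) := Real.sqrt_le_sqrt (by nlinarith [Real.pi_gt_three])
        _ = π := Real.sqrt_sq Real.pi_pos.le
    have habs0 : 0 ≤ |c| := abs_nonneg c
    have hsqK0 : 0 ≤ Real.sqrt K := Real.sqrt_nonneg K
    have key3 : 8*π*|(m:ℝ) - (n:ℝ)| ≤ 8*π*(Real.sqrt K * |c|) := by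
      calc 8*π*|(m:ℝ) - (n:ℝ)| = |c| * (Real.sqrt (8*π*m) + Real.sqrt (8*π*n)) := hprod.symm
        _ ≤ |c| * (8*Real.sqrt π*Real.sqrt K) := mul_le_mul_of_nonneg_left hsum habs0
        _ = (8*Real.sqrt K*|c|) * Real.sqrt π := by ring
        _ ≤ (8*Real.sqrt K*|c|) * π := mul_le_mul_of_nonneg_left hpile (by positivity)
        _ = 8*π*(Real.sqrt K * |c|) := by ring
    nlinarith [key3, Real.pi_pos]
  have hc0 : c ≠ 0 := by
    intro h
    rw [h, abs_zero, mul_zero] at hlow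
    linarith
  have hcpos : 0 < |c| := abs_pos.mpr hc0
  have base := cos_sqrt_integral_bound c hc0 T (T+H) (by linarith) (by linarith)
  have hsTH : Real.sqrt (T+H) ≤ Real.sqrt (2*T) := Real.sqrt_le_sqrt (by linarith)
  have hsKT : Real.sqrt K ≤ Real.sqrt (2*T) := Real.sqrt_le_sqrt (by linarith)
  have hs2T0 : 0 ≤ Real.sqrt (2*T) := Real.sqrt_nonneg _
  have hsqK0 : 0 ≤ Real.sqrt K := Real.sqrt_nonneg K
  have hKs : Real.sqrt K * Real.sqrt K = K := Real.mul_self_sqrt hK0.le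
  have h1 : 4 * Real.sqrt (T+H) / |c| ≤ 4 * Real.sqrt (2*T) * Real.sqrt K / |(m:ℝ) - (n:ℝ)| := by
    rw [div_le_div_iff₀ hcpos hmn0]
    have hTH0 : 0 ≤ Real.sqrt (T+H) := Real.sqrt_nonneg _
    nlinarith [mul_le_mul hsTH hlow hmn0.le hs2T0]
  have h2 : 4 / c^2 ≤ 4 * Real.sqrt (2*T) * Real.sqrt K / |(m:ℝ) - (n:ℝ)| := by
    rw [div_le_div_iff₀ (by positivity) hmn0]
    have hsq : |(m:ℝ) - (n:ℝ)| * |(m:ℝ) - (n:ℝ)| ≤ (Real.sqrt K * |c|) * (Real.sqrt K * |c|) :=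
      mul_self_le_mul_self hmn0.le hlow
    have habs2 : |c| * |c| = c^2 := by rw [← abs_mul, abs_mul_self]; ring
    have e1 : (Real.sqrt K * |c|) * (Real.sqrt K * |c|) = K * c^2 := by
      calc (Real.sqrt K * |c|) * (Real.sqrt K * |c|) = (Real.sqrt K * Real.sqrt K) * (|c| * |c|) := by ring
        _ = K * c^2 := by rw [hKs, habs2]
    have hsq' : |(m:ℝ) - (n:ℝ)| * |(m:ℝ) - (n:ℝ)| ≤ K * c^2 := e1 ▸ hsq
    have hKc : K ≤ Real.sqrt (2*T) * Real.sqrt K := by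
      have := mul_le_mul_of_nonneg_right hsKT hsqK0
      rw [hKs] at this
      linarith
    have p1 : |(m:ℝ) - (n:ℝ)| * 1 ≤ |(m:ℝ) - (n:ℝ)| * |(m:ℝ) - (n:ℝ)| :=
      mul_le_mul_of_nonneg_left h1mn hmn0.le
    have p2 : K * c^2 ≤ (Real.sqrt (2*T) * Real.sqrt K) * c^2 :=
      mul_le_mul_of_nonneg_right hKc (sq_nonneg c)
    nlinarith [p1, p2, hsq']
  calc |∫ t in T..(T+H), Real.cos (c * Real.sqrt t)| ≤ 4 * Real.sqrt (T+H) / |c| + 4 / c^2 := base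
    _ ≤ 4 * Real.sqrt (2*T) * Real.sqrt K / |(m:ℝ) - (n:ℝ)|
        + 4 * Real.sqrt (2*T) * Real.sqrt K / |(m:ℝ) - (n:ℝ)| := add_le_add h1 h2
    _ = 8 * Real.sqrt (2*T) * Real.sqrt K / |(m:ℝ) - (n:ℝ)| := by ring

lemma sum_split (F : Finset ℕ) (a : ℕ → ℝ) (J : ℕ → ℕ → ℝ) (H W Hs : ℝ)
    (hW : 0 ≤ W) (hHs0 : 0 ≤ Hs)
    (hdiag : ∀ n, J n n = H)
    (hoff : ∀ m ∈ F, ∀ n ∈ F, m ≠ n → |J m n| ≤ W / |(m:ℝ) - (n:ℝ)|)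
    (hinner : ∀ m ∈ F, ∑ n ∈ F, (if m ≠ n then 1/|(m:ℝ)-(n:ℝ)| else 0) ≤ 2 * Hs) :
    ∑ m ∈ F, ∑ n ∈ F, a m * a n * J m n
      ≤ H * (∑ n ∈ F, (a n)^2) + 2 * W * Hs * (∑ n ∈ F, (a n)^2) := by
  classical
  have expand : ∑ m ∈ F, ∑ n ∈ F, a m * a n * J m n
      = ∑ m ∈ F, ((a m)^2 * H) + ∑ m ∈ F, ∑ n ∈ F, (if m ≠ n then a m * a n * J m n else 0) := by
    rw [← Finset.sum_add_distrib]
    apply Finset.sum_congr rfl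
    intro m hm
    have e : ∀ n, a m * a n * J m n
        = (if m = n then a m * a n * J m n else 0) + (if m ≠ n then a m * a n * J m n else 0) := by
      intro n; by_cases h : m = n <;> simp [h]
    rw [Finset.sum_congr rfl (fun n _ => e n), Finset.sum_add_distrib, Finset.sum_ite_eq F m]
    simp only [hm, if_true, hdiag m]
    ring_nf
  rw [expand]
  have hbound : ∑ m ∈ F, ∑ n ∈ F, (if m ≠ n then a m * a n * J m n else 0)
      ≤ ∑ m ∈ F, ∑ n ∈ F, (if m ≠ n then ((a m)^2 + (a n)^2)/2 * (W / |(m:ℝ)-(n:ℝ)|) else 0) := by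
    apply Finset.sum_le_sum; intro m hm
    apply Finset.sum_le_sum; intro n hn
    by_cases h : m = n
    · simp [h]
    · simp only [h, ne_eq, not_false_eq_true, if_true]
      have hmn0 : (0:ℝ) < |(m:ℝ) - (n:ℝ)| := by
        rw [abs_pos, sub_ne_zero]
        exact_mod_cast fun he => h (Nat.cast_injective he)
      have h1 : a m * a n * J m n ≤ |a m * a n * J m n| := le_abs_self _
      have h2 : |a m * a n * J m n| = |a m| * |a n| * |J m n| := by
        rw [abs_mul, abs_mul]
      have h3 : |a m| * |a n| * |J m n| ≤ |a m| * |a n| * (W / |(m:ℝ)-(n:ℝ)|) :=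
        mul_le_mul_of_nonneg_left (hoff m hm n hn h) (by positivity)
      have h4 : |a m| * |a n| ≤ ((a m)^2 + (a n)^2)/2 := by
        nlinarith [sq_nonneg (|a m| - |a n|), sq_abs (a m), sq_abs (a n)]
      have h5 : |a m| * |a n| * (W / |(m:ℝ)-(n:ℝ)|)
          ≤ ((a m)^2 + (a n)^2)/2 * (W / |(m:ℝ)-(n:ℝ)|) :=
        mul_le_mul_of_nonneg_right h4 (by positivity)
      linarith
  have hsym : ∑ m ∈ F, ∑ n ∈ F, (if m ≠ n then ((a m)^2 + (a n)^2)/2 * (W / |(m:ℝ)-(n:ℝ)|) else 0)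
      = ∑ m ∈ F, ∑ n ∈ F, (if m ≠ n then (a m)^2 * (W / |(m:ℝ)-(n:ℝ)|) else 0) := by
    have split : ∀ m n : ℕ, (if m ≠ n then ((a m)^2 + (a n)^2)/2 * (W / |(m:ℝ)-(n:ℝ)|) else 0)
        = (1/2) * ((if m ≠ n then (a m)^2 * (W / |(m:ℝ)-(n:ℝ)|) else 0)
          + (if m ≠ n then (a n)^2 * (W / |(m:ℝ)-(n:ℝ)|) else 0)) := by
      intro m n; by_cases h : m = n <;> simp [h] <;> ring
    have hswap : ∑ m ∈ F, ∑ n ∈ F, (if m ≠ n then (a n)^2 * (W / |(m:ℝ)-(n:ℝ)|) else 0)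
        = ∑ m ∈ F, ∑ n ∈ F, (if m ≠ n then (a m)^2 * (W / |(m:ℝ)-(n:ℝ)|) else 0) := by
      rw [Finset.sum_comm]
      apply Finset.sum_congr rfl; intro m _
      apply Finset.sum_congr rfl; intro n _
      rw [abs_sub_comm (n:ℝ) (m:ℝ)]
      by_cases h : m = n
      · simp [h]
      · simp [h, Ne.symm h]
    calc ∑ m ∈ F, ∑ n ∈ F, (if m ≠ n then ((a m)^2 + (a n)^2)/2 * (W / |(m:ℝ)-(n:ℝ)|) else 0)
        = ∑ m ∈ F, ∑ n ∈ F, (1/2) * ((if m ≠ n then (a m)^2 * (W / |(m:ℝ)-(n:ℝ)|) else 0)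
          + (if m ≠ n then (a n)^2 * (W / |(m:ℝ)-(n:ℝ)|) else 0)) := by
          apply Finset.sum_congr rfl; intro m _
          apply Finset.sum_congr rfl; intro n _
          exact split m n
      _ = (1/2) * ((∑ m ∈ F, ∑ n ∈ F, (if m ≠ n then (a m)^2 * (W / |(m:ℝ)-(n:ℝ)|) else 0))
          + ∑ m ∈ F, ∑ n ∈ F, (if m ≠ n then (a n)^2 * (W / |(m:ℝ)-(n:ℝ)|) else 0)) := by
          have per : ∀ m, ∑ n ∈ F, (1/2 : ℝ) * ((if m ≠ n then (a m)^2 * (W / |(m:ℝ)-(n:ℝ)|) else 0)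
              + (if m ≠ n then (a n)^2 * (W / |(m:ℝ)-(n:ℝ)|) else 0))
              = (1/2 : ℝ) * ((∑ n ∈ F, (if m ≠ n then (a m)^2 * (W / |(m:ℝ)-(n:ℝ)|) else 0))
              + ∑ n ∈ F, (if m ≠ n then (a n)^2 * (W / |(m:ℝ)-(n:ℝ)|) else 0)) := by
            intro m
            rw [← Finset.mul_sum, Finset.sum_add_distrib]
          rw [Finset.sum_congr rfl (fun m _ => per m), ← Finset.mul_sum, Finset.sum_add_distrib]
      _ = _ := by rw [hswap]; ring
  have hfin : ∑ m ∈ F, ∑ n ∈ F, (if m ≠ n then (a m)^2 * (W / |(m:ℝ)-(n:ℝ)|) else 0)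
      ≤ 2 * W * Hs * (∑ n ∈ F, (a n)^2) := by
    have per : ∀ m ∈ F, ∑ n ∈ F, (if m ≠ n then (a m)^2 * (W / |(m:ℝ)-(n:ℝ)|) else 0)
        ≤ (a m)^2 * W * (2 * Hs) := by
      intro m hm
      have e : ∑ n ∈ F, (if m ≠ n then (a m)^2 * (W / |(m:ℝ)-(n:ℝ)|) else 0)
          = (a m)^2 * W * ∑ n ∈ F, (if m ≠ n then 1/|(m:ℝ)-(n:ℝ)| else 0) := by
        rw [Finset.mul_sum]
        apply Finset.sum_congr rfl; intro n _
        by_cases h : m = n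
        · simp [h]
        · simp only [h, ne_eq, not_false_eq_true, if_true]
          field_simp
      rw [e]
      exact mul_le_mul_of_nonneg_left (hinner m hm) (by positivity)
    calc ∑ m ∈ F, ∑ n ∈ F, (if m ≠ n then (a m)^2 * (W / |(m:ℝ)-(n:ℝ)|) else 0)
        ≤ ∑ m ∈ F, (a m)^2 * W * (2 * Hs) := Finset.sum_le_sum per
      _ = 2 * W * Hs * (∑ n ∈ F, (a n)^2) := by
          rw [Finset.mul_sum]
          apply Finset.sum_congr rfl; intro m _; ring
  have hdiagsum : ∑ m ∈ F, ((a m)^2 * H) = H * (∑ n ∈ F, (a n)^2) := by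
    rw [Finset.mul_sum]
    apply Finset.sum_congr rfl; intro m _; ring
  calc ∑ m ∈ F, ((a m)^2 * H) + ∑ m ∈ F, ∑ n ∈ F, (if m ≠ n then a m * a n * J m n else 0)
      ≤ ∑ m ∈ F, ((a m)^2 * H) + 2 * W * Hs * (∑ n ∈ F, (a n)^2) := by
        have := hbound.trans (le_of_eq hsym) |>.trans hfin
        linarith
    _ = H * (∑ n ∈ F, (a n)^2) + 2 * W * Hs * (∑ n ∈ F, (a n)^2) := by rw [hdiagsum]

lemma step1 (T H : ℝ) (F : Finset ℕ) (hT : 2 ≤ T) (hH1 : 1 ≤ H) :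
    (∫ t in T..(T + H), T ^ ((1 : ℝ) / 2) *
        ‖∑ n ∈ F, (-1 : ℂ) ^ n * (divd n : ℂ) * (((n : ℝ) ^ ((1 : ℝ) / 4) : ℝ) : ℂ) *
          Complex.exp (Complex.I * (Real.sqrt (8 * π * n * t) : ℂ))‖ ^ 2)
      = T ^ ((1:ℝ)/2) * ∑ m ∈ F, ∑ n ∈ F,
          ((-1:ℝ)^m * divd m * (m:ℝ)^((1:ℝ)/4)) * ((-1:ℝ)^n * divd n * (n:ℝ)^((1:ℝ)/4)) *
          ∫ t in T..(T+H), Real.cos ((Real.sqrt (8*π*m) - Real.sqrt (8*π*n)) * Real.sqrt t) := by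
  set a : ℕ → ℝ := fun n => (-1:ℝ)^n * divd n * (n:ℝ)^((1:ℝ)/4) with ha
  set b : ℕ → ℝ := fun n => Real.sqrt (8*π*n) with hb
  have hTH : T ≤ T + H := by linarith
  have heq : Set.EqOn
      (fun t => T ^ ((1 : ℝ) / 2) *
        ‖∑ n ∈ F, (-1 : ℂ) ^ n * (divd n : ℂ) * (((n : ℝ) ^ ((1 : ℝ) / 4) : ℝ) : ℂ) *
          Complex.exp (Complex.I * (Real.sqrt (8 * π * n * t) : ℂ))‖ ^ 2)
      (fun t => T ^ ((1:ℝ)/2) *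
        ∑ m ∈ F, ∑ n ∈ F, a m * a n * Real.cos ((b m - b n) * Real.sqrt t))
      (Set.uIcc T (T+H)) := by
    intro t ht
    rw [Set.uIcc_of_le hTH] at ht
    have ht0 : (0:ℝ) < t := lt_of_lt_of_le (by linarith) ht.1
    simp only
    congr 1
    have e1 : ∀ n : ℕ, (Complex.I * (Real.sqrt (8*π*n*t) : ℂ))
        = ((b n * Real.sqrt t : ℝ) : ℂ) * Complex.I := by
      intro n
      rw [show (8*π*(n:ℝ)*t) = (8*π*n)*t by ring, Real.sqrt_mul (by positivity)]
      push_cast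
      ring
    calc ‖∑ n ∈ F, (-1 : ℂ) ^ n * (divd n : ℂ) * (((n : ℝ) ^ ((1 : ℝ) / 4) : ℝ) : ℂ) *
          Complex.exp (Complex.I * (Real.sqrt (8 * π * n * t) : ℂ))‖ ^ 2
        = ‖∑ n ∈ F, ((a n : ℝ):ℂ) * Complex.exp (((b n * Real.sqrt t : ℝ)) * Complex.I)‖ ^ 2 := by
          have e2 : (∑ n ∈ F, (-1 : ℂ) ^ n * (divd n : ℂ) * (((n : ℝ) ^ ((1 : ℝ) / 4) : ℝ) : ℂ) *
              Complex.exp (Complex.I * (Real.sqrt (8 * π * n * t) : ℂ)))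
              = ∑ n ∈ F, ((a n : ℝ):ℂ) * Complex.exp (((b n * Real.sqrt t : ℝ)) * Complex.I) := by
            apply Finset.sum_congr rfl
            intro n _
            rw [e1 n, ha]
            push_cast
            ring
          rw [e2]
      _ = ∑ m ∈ F, ∑ n ∈ F, a m * a n *
            Real.cos (b m * Real.sqrt t - b n * Real.sqrt t) :=
          norm_sq_sum_exp F a (fun n => b n * Real.sqrt t)
      _ = ∑ m ∈ F, ∑ n ∈ F, a m * a n * Real.cos ((b m - b n) * Real.sqrt t) := by
          apply Finset.sum_congr rfl; intro m _
          apply Finset.sum_congr rfl; intro n _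
          rw [sub_mul]
  rw [intervalIntegral.integral_congr heq]
  have hcontmn : ∀ m n : ℕ, Continuous fun t => a m * a n * Real.cos ((b m - b n) * Real.sqrt t) :=
    fun m n => continuous_const.mul (Real.continuous_cos.comp (continuous_const.mul Real.continuous_sqrt))
  rw [intervalIntegral.integral_const_mul]
  congr 1
  rw [intervalIntegral.integral_finset_sum (fun m _ =>
    (continuous_finset_sum F (fun n _ => hcontmn m n)).intervalIntegrable T (T+H))]
  apply Finset.sum_congr rfl; intro m _
  rw [intervalIntegral.integral_finset_sum (fun n _ => (hcontmn m n).intervalIntegrable T (T+H))]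
  apply Finset.sum_congr rfl; intro n _
  rw [intervalIntegral.integral_const_mul]


/-- For every `ε > 0` there is `C(ε)` such that for all `T ≥ 2`, `1 ≤ H ≤ T`,
`1 ≤ K ≤ T^{1/3−ε}` and `K < K' ≤ 2K`,
`∫_T^{T+H} T^{1/2} |∑_{K < n ≤ K'} (−1)^n d(n) n^{1/4} e^{i√(8πnt)}|² dt
  ≤ C(ε)(T^{1+ε} H + T^{5/3+ε})`. -/
theorem exponential_sum_I1_bound :
    ∀ ε : ℝ, 0 < ε → ∃ Cε : ℝ, 0 < Cε ∧
      ∀ T : ℝ, 2 ≤ T → ∀ H : ℝ, 1 ≤ H → H ≤ T →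
        ∀ K : ℝ, 1 ≤ K → K ≤ T ^ (1 / 3 - ε : ℝ) → ∀ K' : ℝ, K < K' → K' ≤ 2 * K →
          (∫ t in T..(T + H), T ^ ((1 : ℝ) / 2) *
              ‖∑ n ∈ Finset.Ioc ⌊K⌋₊ ⌊K'⌋₊,
                (-1 : ℂ) ^ n * (divd n : ℂ) * (((n : ℝ) ^ ((1 : ℝ) / 4) : ℝ) : ℂ) *
                  Complex.exp (Complex.I * (Real.sqrt (8 * π * n * t) : ℂ))‖ ^ 2) ≤
            Cε * (T ^ (1 + ε : ℝ) * H + T ^ (5 / 3 + ε : ℝ)) := by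
  intro ε hε
  refine ⟨2*Real.sqrt 2*(16/ε)^3 + 64*(16/ε)^4 + 1, by positivity, ?_⟩
  intro T hT H hH1 hHT K hK1 hKT K' hKK' hK'2K
  have hT0 : (0:ℝ) < T := by linarith
  have hT1 : (1:ℝ) ≤ T := by linarith
  have hK0 : (0:ℝ) < K := by linarith
  have hK'0 : (0:ℝ) < K' := by linarith
  set F := Finset.Ioc ⌊K⌋₊ ⌊K'⌋₊ with hF
  set a : ℕ → ℝ := fun n => (-1:ℝ)^n * divd n * (n:ℝ)^((1:ℝ)/4) with ha
  set b : ℕ → ℝ := fun n => Real.sqrt (8*π*n) with hb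
  set J : ℕ → ℕ → ℝ := fun m n => ∫ t in T..(T+H), Real.cos ((b m - b n) * Real.sqrt t) with hJ
  set D : ℝ := ∑ n ∈ F, (a n)^2 with hD
  set M₁ := ⌊K'⌋₊ with hM₁def
  -- basic facts
  have hM₀1 : 1 ≤ ⌊K⌋₊ := Nat.le_floor (by exact_mod_cast hK1)
  have hM₁1 : 1 ≤ M₁ := Nat.le_floor (by push_cast; linarith)
  have hM₁2K : (M₁:ℝ) ≤ 2*K := le_trans (Nat.floor_le hK'0.le) hK'2K
  have hFmem : ∀ n ∈ F, 1 ≤ n ∧ (n:ℝ) ≤ 2*K := by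
    intro n hn
    rw [hF, Finset.mem_Ioc] at hn
    constructor
    · omega
    · exact le_trans (by exact_mod_cast hn.2) hM₁2K
  have hKT' : K ≤ T := by
    refine hKT.trans ?_
    calc T ^ (1/3 - ε : ℝ) ≤ T ^ (1:ℝ) := Real.rpow_le_rpow_of_exponent_le hT1 (by linarith)
      _ = T := Real.rpow_one T
  have hTH : T ≤ T + H := by linarith
  -- Step 1 : integral identity
  have hcontmn : ∀ m n : ℕ, Continuous fun t => a m * a n * Real.cos ((b m - b n) * Real.sqrt t) :=
    fun m n => continuous_const.mul (Real.continuous_cos.comp (continuous_const.mul Real.continuous_sqrt))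
  have hinteq : (∫ t in T..(T + H), T ^ ((1 : ℝ) / 2) *
        ‖∑ n ∈ F, (-1 : ℂ) ^ n * (divd n : ℂ) * (((n : ℝ) ^ ((1 : ℝ) / 4) : ℝ) : ℂ) *
          Complex.exp (Complex.I * (Real.sqrt (8 * π * n * t) : ℂ))‖ ^ 2)
      = T ^ ((1:ℝ)/2) * ∑ m ∈ F, ∑ n ∈ F, a m * a n * J m n := step1 T H F hT hH1
  rw [hinteq]
  -- Step 2 : J values
  have hdiagJ : ∀ n : ℕ, J n n = H := by
    intro n
    rw [hJ]
    simp only [sub_self, zero_mul, Real.cos_zero]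
    rw [intervalIntegral.integral_const]
    simp
  have hoffJ : ∀ m ∈ F, ∀ n ∈ F, m ≠ n →
      |J m n| ≤ 8 * Real.sqrt (2*T) * Real.sqrt K / |(m:ℝ) - (n:ℝ)| := by
    intro m hm n hn hmn
    exact offJ T H K hT hH1 hHT hK1 hKT' m n (hFmem m hm).2 (hFmem n hn).2 hmn
  -- Step 3 : sum bound
  set Hs : ℝ := ∑ r ∈ Finset.Icc 1 M₁, (1:ℝ)/r with hHs
  have hHs0 : 0 ≤ Hs := harm_nonneg M₁
  have hsum : ∑ m ∈ F, ∑ n ∈ F, a m * a n * J m n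
      ≤ H * D + 16 * Real.sqrt (2*T) * Real.sqrt K * Hs * D := by
    have hinner : ∀ m ∈ F, ∑ n ∈ F, (if m ≠ n then 1/|(m:ℝ)-(n:ℝ)| else 0) ≤ 2 * Hs := by
      intro m hm
      rw [hF, Finset.mem_Ioc] at hm
      exact inner_harm hM₀1 hm.2
    have := sum_split F a J H (8 * Real.sqrt (2*T) * Real.sqrt K) Hs
      (by positivity) hHs0 hdiagJ hoffJ hinner
    calc ∑ m ∈ F, ∑ n ∈ F, a m * a n * J m n
        ≤ H * D + 2 * (8 * Real.sqrt (2*T) * Real.sqrt K) * Hs * D := this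
      _ = H * D + 16 * Real.sqrt (2*T) * Real.sqrt K * Hs * D := by ring
  -- Step 4 : D bound
  set L : ℝ := 1 + Real.log (2*K) with hL
  have hL1 : 1 ≤ L := by
    have : 0 ≤ Real.log (2*K) := Real.log_nonneg (by linarith)
    rw [hL]; linarith
  have hHsL : Hs ≤ L := by
    refine (harm_le M₁).trans ?_
    rw [hL]
    have : Real.log M₁ ≤ Real.log (2*K) :=
      Real.log_le_log (by exact_mod_cast hM₁1) hM₁2K
    linarith
  have hDb : D ≤ Real.sqrt 2 * Real.sqrt K * (2*K) * L^3 := by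
    have hsub : F ⊆ Finset.Icc 1 M₁ := by
      intro n hn
      rw [hF, Finset.mem_Ioc] at hn
      rw [Finset.mem_Icc]
      omega
    have haSq : ∀ n ∈ F, (a n)^2 ≤ Real.sqrt (2*K) * (divd n)^2 := by
      intro n hn
      have hn2K := (hFmem n hn).2
      have e0 : ((-1:ℝ)^n)^2 = 1 := by
        rw [← pow_mul, mul_comm, pow_mul]; norm_num
      have e1 : (a n)^2 = (divd n)^2 * ((n:ℝ)^((1:ℝ)/4))^2 := by
        rw [ha]
        calc ((-1:ℝ)^n * divd n * (n:ℝ)^((1:ℝ)/4))^2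
            = ((-1:ℝ)^n)^2 * (divd n)^2 * ((n:ℝ)^((1:ℝ)/4))^2 := by ring
          _ = (divd n)^2 * ((n:ℝ)^((1:ℝ)/4))^2 := by rw [e0]; ring
      have e2 : ((n:ℝ)^((1:ℝ)/4))^2 = (n:ℝ)^((1:ℝ)/2) := by
        rw [← Real.rpow_natCast ((n:ℝ)^((1:ℝ)/4)) 2, ← Real.rpow_mul (Nat.cast_nonneg n)]
        norm_num
      have e3 : (n:ℝ)^((1:ℝ)/2) ≤ Real.sqrt (2*K) := by
        rw [Real.sqrt_eq_rpow]
        exact Real.rpow_le_rpow (Nat.cast_nonneg n) hn2K (by norm_num)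
      have hd2 : 0 ≤ (divd n)^2 := sq_nonneg _
      calc (a n)^2 = (divd n)^2 * ((n:ℝ)^((1:ℝ)/4))^2 := e1
        _ = (divd n)^2 * (n:ℝ)^((1:ℝ)/2) := by rw [e2]
        _ ≤ (divd n)^2 * Real.sqrt (2*K) := mul_le_mul_of_nonneg_left e3 hd2
        _ = Real.sqrt (2*K) * (divd n)^2 := by ring
    have h1 : D ≤ Real.sqrt (2*K) * ∑ n ∈ Finset.Icc 1 M₁, (divd n)^2 := by
      calc D ≤ ∑ n ∈ F, Real.sqrt (2*K) * (divd n)^2 := Finset.sum_le_sum haSq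
        _ ≤ ∑ n ∈ Finset.Icc 1 M₁, Real.sqrt (2*K) * (divd n)^2 :=
            Finset.sum_le_sum_of_subset_of_nonneg hsub (fun n _ _ => by positivity)
        _ = Real.sqrt (2*K) * ∑ n ∈ Finset.Icc 1 M₁, (divd n)^2 := by rw [Finset.mul_sum]
    have h2 : ∑ n ∈ Finset.Icc 1 M₁, (divd n)^2 ≤ (M₁:ℝ) * (1 + Real.log M₁)^3 :=
      divd_sq_sum M₁ hM₁1
    have h3 : (M₁:ℝ) * (1 + Real.log M₁)^3 ≤ (2*K) * L^3 := by
      have hlM : 0 ≤ 1 + Real.log M₁ := by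
        have : (0:ℝ) ≤ Real.log M₁ := Real.log_nonneg (by exact_mod_cast hM₁1)
        linarith
      have hLM : 1 + Real.log M₁ ≤ L := by
        rw [hL]
        have : Real.log M₁ ≤ Real.log (2*K) :=
          Real.log_le_log (by exact_mod_cast hM₁1) hM₁2K
        linarith
      have := pow_le_pow_left₀ hlM hLM 3
      have hM₁0 : (0:ℝ) ≤ M₁ := Nat.cast_nonneg _
      nlinarith [pow_nonneg hlM 3]
    have e4 : Real.sqrt (2*K) = Real.sqrt 2 * Real.sqrt K := Real.sqrt_mul (by norm_num) K
    calc D ≤ Real.sqrt (2*K) * ∑ n ∈ Finset.Icc 1 M₁, (divd n)^2 := h1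
      _ ≤ Real.sqrt (2*K) * ((2*K) * L^3) := by
          apply mul_le_mul_of_nonneg_left (h2.trans h3) (Real.sqrt_nonneg _)
      _ = Real.sqrt 2 * Real.sqrt K * (2*K) * L^3 := by rw [e4]; ring
  have hD0 : 0 ≤ D := Finset.sum_nonneg fun n _ => sq_nonneg _
  -- Step 5 : numeric assembly
  set D' : ℝ := Real.sqrt 2 * Real.sqrt K * (2*K) * L^3 with hD'
  have hD'0 : 0 ≤ D' := by
    rw [hD']; positivity
  have hsum2 : ∑ m ∈ F, ∑ n ∈ F, a m * a n * J m n
      ≤ H * D' + 16 * Real.sqrt (2*T) * Real.sqrt K * L * D' := by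
    have hW0 : (0:ℝ) ≤ 16 * Real.sqrt (2*T) * Real.sqrt K := by positivity
    have p1 : H * D ≤ H * D' := mul_le_mul_of_nonneg_left hDb (by linarith)
    have hL0 : (0:ℝ) ≤ L := by linarith
    have p2 : Hs * D ≤ L * D' := mul_le_mul hHsL hDb hD0 hL0
    have p3 : 16 * Real.sqrt (2*T) * Real.sqrt K * (Hs * D)
        ≤ 16 * Real.sqrt (2*T) * Real.sqrt K * (L * D') :=
      mul_le_mul_of_nonneg_left p2 hW0
    calc ∑ m ∈ F, ∑ n ∈ F, a m * a n * J m n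
        ≤ H * D + 16 * Real.sqrt (2*T) * Real.sqrt K * Hs * D := hsum
      _ ≤ H * D' + 16 * Real.sqrt (2*T) * Real.sqrt K * L * D' := by nlinarith [p1, p3]
  -- key rpow facts
  have hsqK : Real.sqrt K ≤ T ^ ((1/3 - ε)/2 : ℝ) := by
    calc Real.sqrt K ≤ Real.sqrt (T ^ (1/3 - ε : ℝ)) := Real.sqrt_le_sqrt hKT
      _ = T ^ ((1/3 - ε)/2 : ℝ) := by
          rw [Real.sqrt_eq_rpow, ← Real.rpow_mul hT0.le]
          congr 1
          ring
  have hL0 : (0:ℝ) ≤ L := by linarith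
  have hlogT0 : (0:ℝ) ≤ Real.log T := Real.log_nonneg hT1
  have hLb : L ≤ (16/ε) * T ^ (ε/4 : ℝ) := by
    have hlog2K : Real.log (2*K) = Real.log 2 + Real.log K := Real.log_mul (by norm_num) (by linarith)
    have hlog2 : Real.log 2 ≤ 1 := by
      have := Real.log_le_sub_one_of_pos (by norm_num : (0:ℝ) < 2)
      linarith
    have hlogK : Real.log K ≤ Real.log T := by
      calc Real.log K ≤ Real.log (T ^ (1/3 - ε : ℝ)) := Real.log_le_log hK0 hKT
        _ = (1/3 - ε) * Real.log T := Real.log_rpow hT0 _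
        _ ≤ 1 * Real.log T := mul_le_mul_of_nonneg_right (by linarith) hlogT0
        _ = Real.log T := one_mul _
    have hlogT2 : (0.69:ℝ) ≤ Real.log T := by
      have h2 := Real.log_le_log (by norm_num : (0:ℝ) < 2) hT
      have := Real.log_two_gt_d9
      linarith
    have hL4 : L ≤ 4 * Real.log T := by
      rw [hL, hlog2K]
      linarith
    have hlogTb : Real.log T ≤ (4/ε) * T ^ (ε/4 : ℝ) := by
      have h1 : Real.log (T ^ (ε/4 : ℝ)) = (ε/4) * Real.log T := Real.log_rpow hT0 _
      have h2 : Real.log (T ^ (ε/4 : ℝ)) ≤ T ^ (ε/4 : ℝ) := by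
        have := Real.log_le_sub_one_of_pos (show (0:ℝ) < T ^ (ε/4 : ℝ) from Real.rpow_pos_of_pos hT0 _)
        linarith
      rw [h1] at h2
      rw [div_mul_eq_mul_div, le_div_iff₀ hε]
      linarith
    calc L ≤ 4 * Real.log T := hL4
      _ ≤ 4 * ((4/ε) * T ^ (ε/4 : ℝ)) := mul_le_mul_of_nonneg_left hlogTb (by norm_num)
      _ = (16/ε) * T ^ (ε/4 : ℝ) := by ring
  have hrpow0 : ∀ x : ℝ, (0:ℝ) ≤ T ^ x := fun x => Real.rpow_nonneg hT0.le x
  have hKrw : K ≤ T ^ (1/3 - ε : ℝ) := hKT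
  -- term 1
  have hterm1 : T ^ ((1:ℝ)/2) * (H * D') ≤ (2 * Real.sqrt 2 * (16/ε)^3) * (T ^ (1 + ε : ℝ) * H) := by
    have hLc : L^3 ≤ (16/ε)^3 * T ^ (3*(ε/4) : ℝ) := by
      calc L^3 ≤ ((16/ε) * T ^ (ε/4 : ℝ))^3 := pow_le_pow_left₀ hL0 hLb 3
        _ = (16/ε)^3 * (T ^ (ε/4 : ℝ))^3 := by ring
        _ = (16/ε)^3 * T ^ (3*(ε/4) : ℝ) := by
            rw [← Real.rpow_natCast (T ^ (ε/4 : ℝ)) 3, ← Real.rpow_mul hT0.le]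
            congr 1
            push_cast
            ring
    have hmono : T ^ ((1:ℝ)/2) * (Real.sqrt K * K * L^3)
        ≤ T ^ ((1:ℝ)/2) * ((T ^ ((1/3 - ε)/2 : ℝ)) * (T ^ (1/3 - ε : ℝ)) * ((16/ε)^3 * T ^ (3*(ε/4) : ℝ))) := by
      gcongr <;> first
        | exact Real.sqrt_nonneg K
        | linarith
        | exact hsqK
        | exact hKrw
        | exact hLc
    have hcollapse : T ^ ((1:ℝ)/2) * ((T ^ ((1/3 - ε)/2 : ℝ)) * (T ^ (1/3 - ε : ℝ)) * ((16/ε)^3 * T ^ (3*(ε/4) : ℝ)))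
        = (16/ε)^3 * T ^ ((1:ℝ)/2 + ((1/3 - ε)/2 + ((1/3 - ε) + 3*(ε/4))) : ℝ) := by
      rw [Real.rpow_add hT0, Real.rpow_add hT0, Real.rpow_add hT0]
      ring
    have hexp : T ^ ((1:ℝ)/2 + ((1/3 - ε)/2 + ((1/3 - ε) + 3*(ε/4))) : ℝ) ≤ T ^ (1 + ε : ℝ) :=
      Real.rpow_le_rpow_of_exponent_le hT1 (by linarith)
    calc T ^ ((1:ℝ)/2) * (H * D')
        = (2 * Real.sqrt 2) * (T ^ ((1:ℝ)/2) * (Real.sqrt K * K * L^3)) * H := by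
          rw [hD']; ring
      _ ≤ (2 * Real.sqrt 2) * (T ^ ((1:ℝ)/2) * ((T ^ ((1/3 - ε)/2 : ℝ)) * (T ^ (1/3 - ε : ℝ)) * ((16/ε)^3 * T ^ (3*(ε/4) : ℝ)))) * H := by
          apply mul_le_mul_of_nonneg_right (mul_le_mul_of_nonneg_left hmono (by positivity)) (by linarith)
      _ = (2 * Real.sqrt 2 * (16/ε)^3) * (T ^ ((1:ℝ)/2 + ((1/3 - ε)/2 + ((1/3 - ε) + 3*(ε/4))) : ℝ) * H) := by
          rw [hcollapse]; ring
      _ ≤ (2 * Real.sqrt 2 * (16/ε)^3) * (T ^ (1 + ε : ℝ) * H) := by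
          apply mul_le_mul_of_nonneg_left (mul_le_mul_of_nonneg_right hexp (by linarith)) (by positivity)
  -- term 2
  have hterm2 : T ^ ((1:ℝ)/2) * (16 * Real.sqrt (2*T) * Real.sqrt K * L * D')
      ≤ (64 * (16/ε)^4) * T ^ (5/3 + ε : ℝ) := by
    have hsqrt2T : Real.sqrt (2*T) = Real.sqrt 2 * Real.sqrt T := Real.sqrt_mul (by norm_num) T
    have hsqrtT : Real.sqrt T = T ^ ((1:ℝ)/2) := Real.sqrt_eq_rpow T
    have hsq2 : Real.sqrt 2 * Real.sqrt 2 = 2 := Real.mul_self_sqrt (by norm_num)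
    have hKK : Real.sqrt K * Real.sqrt K = K := Real.mul_self_sqrt hK0.le
    have hTT : T ^ ((1:ℝ)/2) * T ^ ((1:ℝ)/2) = T := by
      rw [← Real.rpow_add hT0]; norm_num
    have e : T ^ ((1:ℝ)/2) * (16 * Real.sqrt (2*T) * Real.sqrt K * L * D')
        = 64 * (T * (K * (K * L^4))) := by
      rw [hD', hsqrt2T, hsqrtT]
      calc T ^ ((1:ℝ)/2) * (16 * (Real.sqrt 2 * T ^ ((1:ℝ)/2)) * Real.sqrt K * L *
            (Real.sqrt 2 * Real.sqrt K * (2*K) * L^3))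
          = 32 * ((Real.sqrt 2 * Real.sqrt 2) * ((T ^ ((1:ℝ)/2) * T ^ ((1:ℝ)/2)) *
            ((Real.sqrt K * Real.sqrt K) * (K * (L * L^3))))) := by ring
        _ = 64 * (T * (K * (K * L^4))) := by rw [hsq2, hKK, hTT]; ring
    have hLc : L^4 ≤ (16/ε)^4 * T ^ (4*(ε/4) : ℝ) := by
      calc L^4 ≤ ((16/ε) * T ^ (ε/4 : ℝ))^4 := pow_le_pow_left₀ hL0 hLb 4
        _ = (16/ε)^4 * (T ^ (ε/4 : ℝ))^4 := by ring
        _ = (16/ε)^4 * T ^ (4*(ε/4) : ℝ) := by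
            rw [← Real.rpow_natCast (T ^ (ε/4 : ℝ)) 4, ← Real.rpow_mul hT0.le]
            congr 1
            push_cast
            ring
    have hmono : T * (K * (K * L^4))
        ≤ T ^ (1:ℝ) * ((T ^ (1/3 - ε : ℝ)) * ((T ^ (1/3 - ε : ℝ)) * ((16/ε)^4 * T ^ (4*(ε/4) : ℝ)))) := by
      rw [Real.rpow_one]
      gcongr <;> first
        | linarith
        | exact hKrw
        | exact hLc
    have hcollapse : T ^ (1:ℝ) * ((T ^ (1/3 - ε : ℝ)) * ((T ^ (1/3 - ε : ℝ)) * ((16/ε)^4 * T ^ (4*(ε/4) : ℝ))))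
        = (16/ε)^4 * T ^ ((1:ℝ) + ((1/3 - ε) + ((1/3 - ε) + 4*(ε/4))) : ℝ) := by
      rw [Real.rpow_add hT0, Real.rpow_add hT0, Real.rpow_add hT0]
      ring
    have hexp : T ^ ((1:ℝ) + ((1/3 - ε) + ((1/3 - ε) + 4*(ε/4))) : ℝ) ≤ T ^ (5/3 + ε : ℝ) :=
      Real.rpow_le_rpow_of_exponent_le hT1 (by linarith)
    calc T ^ ((1:ℝ)/2) * (16 * Real.sqrt (2*T) * Real.sqrt K * L * D')
        = 64 * (T * (K * (K * L^4))) := e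
      _ ≤ 64 * ((16/ε)^4 * T ^ ((1:ℝ) + ((1/3 - ε) + ((1/3 - ε) + 4*(ε/4))) : ℝ)) := by
          rw [← hcollapse]
          exact mul_le_mul_of_nonneg_left hmono (by norm_num)
      _ ≤ 64 * ((16/ε)^4 * T ^ (5/3 + ε : ℝ)) :=
          mul_le_mul_of_nonneg_left (mul_le_mul_of_nonneg_left hexp (by positivity)) (by norm_num)
      _ = (64 * (16/ε)^4) * T ^ (5/3 + ε : ℝ) := by ring
  -- combine
  have hmain : T ^ ((1:ℝ)/2) * ∑ m ∈ F, ∑ n ∈ F, a m * a n * J m n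
      ≤ (2 * Real.sqrt 2 * (16/ε)^3) * (T ^ (1 + ε : ℝ) * H) + (64 * (16/ε)^4) * T ^ (5/3 + ε : ℝ) := by
    calc T ^ ((1:ℝ)/2) * ∑ m ∈ F, ∑ n ∈ F, a m * a n * J m n
        ≤ T ^ ((1:ℝ)/2) * (H * D' + 16 * Real.sqrt (2*T) * Real.sqrt K * L * D') :=
          mul_le_mul_of_nonneg_left hsum2 (hrpow0 _)
      _ = T ^ ((1:ℝ)/2) * (H * D') + T ^ ((1:ℝ)/2) * (16 * Real.sqrt (2*T) * Real.sqrt K * L * D') := by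
          ring
      _ ≤ _ := add_le_add hterm1 hterm2
  have hX0 : 0 ≤ T ^ (1 + ε : ℝ) * H := mul_nonneg (hrpow0 _) (by linarith)
  have hY0 : 0 ≤ T ^ (5/3 + ε : ℝ) := hrpow0 _
  have hc1 : (0:ℝ) ≤ 2 * Real.sqrt 2 * (16/ε)^3 := by positivity
  have hc2 : (0:ℝ) ≤ 64 * (16/ε)^4 := by positivity
  refine hmain.trans ?_
  nlinarith [hX0, hY0, hc1, hc2]
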